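/- Let μ and ν be positive Borel measures on (0,∞) with ∫_{(0,∞)} min(1,x) μ(dx) < ∞ and ∫_{(0,∞)} min(1,x) ν(dx) < ∞. If ∫_{(0,∞)} G⁰₁ h(x) μ(dx) = ∫_{(0,∞)} G⁰₁ h(x) ν(dx) for every nonnegative h ∈ C₀([0,∞)) (these integrals are finite), then μ = ν. -/

import Mathlib

open MeasureTheory Real Filter Topology

/-- The resolvent density of killed Brownian motion on `(0,∞)`. -/
noncomputable def g0 (α x y : ℝ) : ℝ :=
  (2 / Real.sqrt (2 * α)) * Real.sinh (Real.sqrt (2 * α) * min x y) *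
    Real.exp (-(Real.sqrt (2 * α) * max x y))

/-- The resolvent `G⁰_α h` of killed Brownian motion on `(0,∞)`. -/
noncomputable def G0 (α : ℝ) (h : ℝ → ℝ) (x : ℝ) : ℝ :=
  ∫ y in Set.Ioi (0 : ℝ), g0 α x y * h y

/-- `h ∈ C₀([0,∞))`: continuous on `[0,∞)` and vanishing at infinity. -/
def MemC0 (h : ℝ → ℝ) : Prop :=
  ContinuousOn h (Set.Ici 0) ∧ Filter.Tendsto h Filter.atTop (nhds 0)

/-!
For `f ∈ C²` with compact support in `(0, ∞)`, integrating by parts against the solutions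
`sinh (√(2α) y)` and `exp (-√(2α) y)` of `u'' = 2α u` gives `G⁰_α (α f - f''/2) = f`.
Both `(α f - f''/2)⁺` and `(α f - f''/2)⁻` are nonnegative and in `C₀`, so the hypothesis yields
`∫ f dμ = ∫ f dν`; all integrals are finite because `0 ≤ g⁰_α(x, y) ≤ C min(1, x)`.
Smooth bumps squeezed around `[p, q] ⊂ (0, ∞)` then give `μ [p, q] = ν [p, q]`, and these
intervals determine a measure on `(0, ∞)`.
-/

open Set
open scoped ENNReal

section Kernel

variable {α x y : ℝ}

lemma g0_of_le (h : y ≤ x) :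
    g0 α x y = 2 / √(2 * α) * sinh (√(2 * α) * y) * exp (-(√(2 * α) * x)) := by
  rw [g0, min_eq_right h, max_eq_left h]

lemma g0_of_ge (h : x ≤ y) :
    g0 α x y = 2 / √(2 * α) * sinh (√(2 * α) * x) * exp (-(√(2 * α) * y)) := by
  rw [g0, min_eq_left h, max_eq_right h]

lemma g0_nonneg (hx : 0 ≤ x) (hy : 0 ≤ y) : 0 ≤ g0 α x y := by
  have : 0 ≤ sinh (√(2 * α) * min x y) := sinh_nonneg_iff.mpr (by positivity)
  unfold g0
  positivity

lemma continuous_g0 : Continuous fun p : ℝ × ℝ => g0 α p.1 p.2 := by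
  unfold g0
  fun_prop

lemma sinh_mul_exp_neg_le {s t : ℝ} (hs : 0 ≤ s) (hst : s ≤ t) :
    sinh s * exp (-t) ≤ min s (1 / 2) := by
  have hsinh : 0 ≤ sinh s := sinh_nonneg_iff.mpr hs
  have hexp : exp (-s) * exp (-s) = exp (-(2 * s)) := by rw [← exp_add]; ring_nf
  calc sinh s * exp (-t) ≤ sinh s * exp (-s) := by gcongr
    _ = (1 - exp (-(2 * s))) / 2 := by
      have : exp s * exp (-s) = 1 := by rw [← exp_add]; simp
      rw [sinh_eq, ← hexp]; linear_combination this / 2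
    _ ≤ min s (1 / 2) := by
      have := add_one_le_exp (-(2 * s))
      have := exp_pos (-(2 * s))
      exact le_min (by linarith) (by linarith)

lemma g0_le_mul_min_one (hx : 0 ≤ x) (hy : 0 ≤ y) :
    g0 α x y ≤ max 2 (1 / √(2 * α)) * min 1 x := by
  set c := √(2 * α)
  have hbound := sinh_mul_exp_neg_le (mul_nonneg (sqrt_nonneg (2 * α)) (le_min hx hy))
    (mul_le_mul_of_nonneg_left (min_le_max : min x y ≤ max x y) (sqrt_nonneg (2 * α)))
  rcases (sqrt_nonneg (2 * α)).eq_or_lt with hc | hc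
  · simp [g0, ← hc]; positivity
  have : g0 α x y ≤ min (2 * x) (1 / c) := by
    calc g0 α x y = 2 / c * (sinh (c * min x y) * exp (-(c * max x y))) := by
          rw [g0]; ring
      _ ≤ 2 / c * min (c * min x y) (1 / 2) := by gcongr
      _ ≤ min (2 * x) (1 / c) := by
          rw [mul_min_of_nonneg _ _ (by positivity)]
          apply min_le_min
          · rw [← mul_assoc, div_mul_cancel₀ 2 hc.ne']; linarith [min_le_left x y]
          · apply le_of_eq; field_simp
  rcases le_total x 1 with hx1 | hx1
  · rw [min_eq_right hx1]
    nlinarith [min_le_left (2 * x) (1 / c), le_max_left 2 (1 / c)]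
  · rw [min_eq_left hx1, mul_one]
    exact this.trans ((min_le_right _ _).trans (le_max_right _ _))

end Kernel

section Resolvent

variable {f : ℝ → ℝ}

lemma HasDerivAt.wronskian_div_two {u u' f' : ℝ → ℝ} {k f'' y : ℝ}
    (hu : HasDerivAt u (u' y) y) (hu' : HasDerivAt u' (k * u y) y)
    (hf : HasDerivAt f (f' y) y) (hf' : HasDerivAt f' f'' y) :
    HasDerivAt (fun z => (u' z * f z - u z * f' z) / 2) (u y * (k * f y - f'') / 2) y :=
  (((hu'.mul hf).sub (hu.mul hf')).div_const 2).congr_deriv (by ring)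

lemma hasDerivAt_wronskian_sinh (hf : ContDiff ℝ 2 f) (c y : ℝ) :
    HasDerivAt (fun z => (c * cosh (c * z) * f z - sinh (c * z) * deriv f z) / 2)
      (sinh (c * y) * (c ^ 2 * f y - deriv (deriv f) y) / 2) y := by
  have hlin : HasDerivAt (fun y => c * y) c y := by simpa using (hasDerivAt_id' y).const_mul c
  exact HasDerivAt.wronskian_div_two (hlin.sinh.congr_deriv (mul_comm _ _))
    ((hlin.cosh.const_mul c).congr_deriv (by ring))
    ((hf.differentiable (by norm_num)) y).hasDerivAt
    (hf.differentiable_deriv_two y).hasDerivAt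

lemma hasDerivAt_wronskian_exp (hf : ContDiff ℝ 2 f) (c y : ℝ) :
    HasDerivAt (fun z => (-c * exp (-(c * z)) * f z - exp (-(c * z)) * deriv f z) / 2)
      (exp (-(c * y)) * (c ^ 2 * f y - deriv (deriv f) y) / 2) y := by
  have hexp : ∀ y, HasDerivAt (fun y => exp (-(c * y))) (-c * exp (-(c * y))) y := fun y =>
    (((hasDerivAt_id' y).const_mul c).fun_neg.exp).congr_deriv (by ring)
  exact HasDerivAt.wronskian_div_two (hexp y)
    (((hexp y).const_mul (-c)).congr_deriv (by ring))
    ((hf.differentiable (by norm_num)) y).hasDerivAt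
    (hf.differentiable_deriv_two y).hasDerivAt

lemma G0_eq_intervalIntegral {α x R : ℝ} {h : ℝ → ℝ} (hR : 0 ≤ R)
    (hh : ∀ y, R < y → h y = 0) : G0 α h x = ∫ y in (0)..R, g0 α x y * h y := by
  rw [G0, intervalIntegral.integral_of_le hR]
  refine setIntegral_eq_of_subset_of_forall_sdiff_eq_zero measurableSet_Ioi Ioc_subset_Ioi_self
    fun y hy => ?_
  rw [hh y (not_le.mp (hy.2 ⟨hy.1, ·⟩)), mul_zero]

variable {α c : ℝ}

lemma intervalIntegral_g0_mul_resolvent_left (hα : 0 ≤ α) (hc : √(2 * α) = c)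
    (hf : ContDiff ℝ 2 f) {x : ℝ} (hx : 0 ≤ x) :
    ∫ y in (0)..x, g0 α x y * (α * f y - deriv (deriv f) y / 2) = 2 / c * exp (-(c * x)) *
      ((c * cosh (c * x) * f x - sinh (c * x) * deriv f x) / 2 - c * f 0 / 2) := by
  have hc2 : c ^ 2 = 2 * α := hc ▸ sq_sqrt (by linarith)
  have := hf.continuous
  have := (hf.deriv' (n := 1)).continuous_deriv_one
  rw [intervalIntegral.integral_congr (g := fun y => 2 / c * exp (-(c * x)) *
    (sinh (c * y) * (c ^ 2 * f y - deriv (deriv f) y) / 2)), intervalIntegral.integral_const_mul,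
    intervalIntegral.integral_eq_sub_of_hasDerivAt (fun y _ => hasDerivAt_wronskian_sinh hf c y)
    (Continuous.intervalIntegrable (by fun_prop) _ _)]
  · simp
  · intro y hy
    rw [uIcc_of_le hx] at hy
    simp only [g0_of_le hy.2, hc, hc2]
    ring

lemma intervalIntegral_g0_mul_resolvent_right (hα : 0 ≤ α) (hc : √(2 * α) = c)
    (hf : ContDiff ℝ 2 f) {x R : ℝ} (hxR : x ≤ R) :
    ∫ y in x..R, g0 α x y * (α * f y - deriv (deriv f) y / 2) = 2 / c * sinh (c * x) *
      ((-c * exp (-(c * R)) * f R - exp (-(c * R)) * deriv f R) / 2 +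
        exp (-(c * x)) * (deriv f x + c * f x) / 2) := by
  have hc2 : c ^ 2 = 2 * α := hc ▸ sq_sqrt (by linarith)
  have := hf.continuous
  have := (hf.deriv' (n := 1)).continuous_deriv_one
  rw [intervalIntegral.integral_congr (g := fun y => 2 / c * sinh (c * x) *
    (exp (-(c * y)) * (c ^ 2 * f y - deriv (deriv f) y) / 2)), intervalIntegral.integral_const_mul,
    intervalIntegral.integral_eq_sub_of_hasDerivAt (fun y _ => hasDerivAt_wronskian_exp hf c y)
    (Continuous.intervalIntegrable (by fun_prop) _ _)]
  · ring
  · intro y hy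
    rw [uIcc_of_le hxR] at hy
    simp only [g0_of_ge hy.1, hc, hc2]
    ring

lemma G0_resolvent_eq {a b x : ℝ} (hα : 0 < α) (hf : ContDiff ℝ 2 f)
    (ha : 0 < a) (hsupp : tsupport f ⊆ Icc a b) (hx : 0 < x) :
    G0 α (fun y => α * f y - deriv (deriv f) y / 2) x = f x := by
  obtain ⟨c, hc⟩ : ∃ c, √(2 * α) = c := ⟨_, rfl⟩
  have hc0 : 0 < c := hc ▸ sqrt_pos.mpr (by linarith)
  have hf0 : ∀ y ∉ Icc a b, f y = 0 := fun y hy => image_eq_zero_of_notMem_tsupport (hy ∘ (hsupp ·))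
  have hf'0 : ∀ y ∉ Icc a b, deriv f y = 0 := fun y hy => deriv_of_notMem_tsupport (hy ∘ (hsupp ·))
  have hf''0 : ∀ y ∉ Icc a b, deriv (deriv f) y = 0 := fun y hy =>
    deriv_of_notMem_tsupport (hy ∘ (hsupp <| tsupport_deriv_subset ·))
  have hcont : Continuous fun y => g0 α x y * (α * f y - deriv (deriv f) y / 2) := by
    have := hf.continuous
    have := (hf.deriv' (n := 1)).continuous_deriv_one
    exact (continuous_g0.comp (continuous_const.prodMk continuous_id)).mul (by fun_prop)
  set R := max x b + 1
  have hbR : b < R := by linarith [le_max_right x b]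
  have hRb : R ∉ Icc a b := fun hR => by linarith [hR.2]
  have hxR : x ≤ R := by linarith [le_max_left x b]
  rw [G0_eq_intervalIntegral (R := R) (by linarith) fun y hy => by
      simp [hf0 y (fun h => by linarith [h.2]), hf''0 y (fun h => by linarith [h.2])],
    ← intervalIntegral.integral_add_adjacent_intervals (hcont.intervalIntegrable _ _)
      (hcont.intervalIntegrable _ _),
    intervalIntegral_g0_mul_resolvent_left hα.le hc hf hx.le,
    intervalIntegral_g0_mul_resolvent_right hα.le hc hf hxR,
    hf0 0 (fun h => by linarith [h.1]), hf0 R hRb, hf'0 R hRb]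
  have hexp : exp (-(c * x)) * (cosh (c * x) + sinh (c * x)) = 1 := by
    rw [cosh_add_sinh, ← exp_add, neg_add_cancel, exp_zero]
  linear_combination f x * hexp +
    exp (-(c * x)) * (cosh (c * x) + sinh (c * x)) * f x * inv_mul_cancel₀ hc0.ne'

end Resolvent

section Integrability

variable {α x : ℝ} {h : ℝ → ℝ} {μ : Measure ℝ}

lemma integrableOn_g0_mul (hx : 0 ≤ x) (hh : IntegrableOn h (Ioi 0)) :
    IntegrableOn (fun y => g0 α x y * h y) (Ioi 0) :=
  hh.bdd_mul (c := max 2 (1 / √(2 * α)) * min 1 x)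
    (continuous_g0.comp (continuous_const.prodMk continuous_id)).aestronglyMeasurable
    (ae_restrict_of_forall_mem measurableSet_Ioi fun y (hy : 0 < y) => by
      rw [Real.norm_eq_abs, abs_of_nonneg (g0_nonneg hx hy.le)]
      exact g0_le_mul_min_one hx hy.le)

lemma G0_sub {h₁ h₂ : ℝ → ℝ} (hx : 0 ≤ x) (hh₁ : IntegrableOn h₁ (Ioi 0))
    (hh₂ : IntegrableOn h₂ (Ioi 0)) : G0 α (h₁ - h₂) x = G0 α h₁ x - G0 α h₂ x := by
  simp only [G0, Pi.sub_apply, mul_sub]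
  exact integral_sub (integrableOn_g0_mul hx hh₁) (integrableOn_g0_mul hx hh₂)

lemma abs_G0_le (hx : 0 ≤ x) (hh : IntegrableOn h (Ioi 0)) :
    |G0 α h x| ≤ max 2 (1 / √(2 * α)) * (∫ y in Ioi 0, |h y|) * min 1 x := by
  have hint : IntegrableOn (fun y => max 2 (1 / √(2 * α)) * min 1 x * |h y|) (Ioi 0) :=
    hh.abs.const_mul _
  calc |G0 α h x| ≤ ∫ y in Ioi 0, max 2 (1 / √(2 * α)) * min 1 x * |h y| := by
        rw [← Real.norm_eq_abs, G0]
        refine norm_integral_le_of_norm_le hint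
          (ae_restrict_of_forall_mem measurableSet_Ioi fun y (hy : 0 < y) => ?_)
        rw [norm_mul, Real.norm_eq_abs, Real.norm_eq_abs, abs_of_nonneg (g0_nonneg hx hy.le)]
        exact mul_le_mul_of_nonneg_right (g0_le_mul_min_one hx hy.le) (abs_nonneg _)
    _ = max 2 (1 / √(2 * α)) * (∫ y in Ioi 0, |h y|) * min 1 x := by
        rw [integral_const_mul]; ring

lemma stronglyMeasurable_G0 (hh : Measurable h) : StronglyMeasurable (G0 α h) :=
  StronglyMeasurable.integral_prod_right' (ν := volume.restrict (Ioi 0))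
    (f := fun p : ℝ × ℝ => g0 α p.1 p.2 * h p.2)
    (continuous_g0.measurable.mul (hh.comp measurable_snd)).stronglyMeasurable

lemma integrable_min_one_of_lintegral_lt_top
    (hμ : ∫⁻ x in Ioi 0, ENNReal.ofReal (min 1 x) ∂μ < ⊤) :
    Integrable (fun x => min 1 x) (μ.restrict (Ioi 0)) := by
  refine ⟨by fun_prop, (hasFiniteIntegral_iff_ofReal ?_).mpr hμ⟩
  exact ae_restrict_of_forall_mem measurableSet_Ioi fun x (hx : 0 < x) => le_min zero_le_one hx.le

lemma integrable_G0 (hμ : ∫⁻ x in Ioi 0, ENNReal.ofReal (min 1 x) ∂μ < ⊤)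
    (hm : Measurable h) (hh : IntegrableOn h (Ioi 0)) :
    Integrable (G0 α h) (μ.restrict (Ioi 0)) :=
  ((integrable_min_one_of_lintegral_lt_top hμ).const_mul _).mono'
    (stronglyMeasurable_G0 hm).aestronglyMeasurable
    (ae_restrict_of_forall_mem measurableSet_Ioi fun _ hx => abs_G0_le (le_of_lt hx) hh)

lemma measure_Icc_ne_top_of_lintegral_lt_top
    (hμ : ∫⁻ x in Ioi 0, ENNReal.ofReal (min 1 x) ∂μ < ⊤) {p q : ℝ} (hp : 0 < p) :
    μ.restrict (Ioi 0) (Icc p q) ≠ ∞ := by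
  refine ne_top_of_le_ne_top ((integrable_min_one_of_lintegral_lt_top hμ).measure_norm_ge_lt_top
    (lt_min one_pos hp)).ne (measure_mono fun x hx => ?_)
  have hx0 : 0 < x := hp.trans_le hx.1
  simp only [mem_ofPred_eq, Real.norm_eq_abs, abs_of_nonneg (le_min zero_le_one hx0.le)]
  exact min_le_min le_rfl hx.1

end Integrability

lemma memC0_of_hasCompactSupport {h : ℝ → ℝ} (hc : Continuous h) (hs : HasCompactSupport h) :
    MemC0 h :=
  ⟨hc.continuousOn, hs.is_zero_at_infty.mono_left atTop_le_cocompact⟩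

lemma setIntegral_Ioi_eq_of_integral_G0_eq {α : ℝ} (hα : 0 < α) {μ ν : Measure ℝ}
    (hμ : ∫⁻ x in Ioi 0, ENNReal.ofReal (min 1 x) ∂μ < ⊤)
    (hν : ∫⁻ x in Ioi 0, ENNReal.ofReal (min 1 x) ∂ν < ⊤)
    (heq : ∀ h : ℝ → ℝ, MemC0 h → (∀ x, 0 ≤ h x) →
      ∫ x in Ioi 0, G0 α h x ∂μ = ∫ x in Ioi 0, G0 α h x ∂ν)
    {f : ℝ → ℝ} (hf : ContDiff ℝ 2 f) {a b : ℝ} (ha : 0 < a) (hsupp : tsupport f ⊆ Icc a b) :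
    ∫ x in Ioi 0, f x ∂μ = ∫ x in Ioi 0, f x ∂ν := by
  set h := fun y => α * f y - deriv (deriv f) y / 2
  have hfs : HasCompactSupport f := isCompact_Icc.of_isClosed_subset (isClosed_tsupport f) hsupp
  have hhc : Continuous h := by
    have := hf.continuous
    have := (hf.deriv' (n := 1)).continuous_deriv_one
    fun_prop
  have hhs : HasCompactSupport h :=
    (hfs.mul_left (f := fun _ => α)).sub (hfs.deriv.deriv.comp_left (g := (· / 2)) (zero_div 2))
  set hp := fun y => max (h y) 0
  set hm := fun y => max (-h y) 0
  have hpc : Continuous hp := hhc.max continuous_const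
  have hmc : Continuous hm := hhc.neg.max continuous_const
  have hps : HasCompactSupport hp := hhs.comp_left (g := fun t => max t 0) (by simp)
  have hms : HasCompactSupport hm := hhs.comp_left (g := fun t => max (-t) 0) (by simp)
  have hpi : IntegrableOn hp (Ioi 0) := (hpc.integrable_of_hasCompactSupport hps).integrableOn
  have hmi : IntegrableOn hm (Ioi 0) := (hmc.integrable_of_hasCompactSupport hms).integrableOn
  have hsplit : ∀ κ : Measure ℝ, ∫⁻ x in Ioi 0, ENNReal.ofReal (min 1 x) ∂κ < ⊤ →
      ∫ x in Ioi 0, f x ∂κ = ∫ x in Ioi 0, G0 α hp x ∂κ - ∫ x in Ioi 0, G0 α hm x ∂κ := by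
    intro κ hκ
    rw [← integral_sub (integrable_G0 hκ hpc.measurable hpi) (integrable_G0 hκ hmc.measurable hmi)]
    refine setIntegral_congr_fun measurableSet_Ioi fun x (hx : 0 < x) => ?_
    rw [← G0_sub hx.le hpi hmi, ← G0_resolvent_eq hα hf ha hsupp hx]
    congr 1
    funext y
    exact (max_zero_sub_max_neg_zero_eq_self (h y)).symm
  rw [hsplit μ hμ, hsplit ν hν,
    heq hp (memC0_of_hasCompactSupport hpc hps) fun _ => le_max_right _ _,
    heq hm (memC0_of_hasCompactSupport hmc hms) fun _ => le_max_right _ _]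

section Bump

open Metric

lemma integrable_indicator_one_closedBall {X : Type*} [PseudoMetricSpace X] [MeasurableSpace X]
    [OpensMeasurableSpace X] {μ : Measure X} {c : X} {r : ℝ} (hμ : μ (closedBall c r) ≠ ∞) :
    Integrable ((closedBall c r).indicator (1 : X → ℝ)) μ :=
  (integrableOn_const hμ).integrable_indicator measurableSet_closedBall

variable {E : Type*} [NormedAddCommGroup E] [NormedSpace ℝ E] [HasContDiffBump E] {c : E}

lemma ContDiffBump.indicator_closedBall_le (φ : ContDiffBump c) {ρ : ℝ} (hρ : ρ ≤ φ.rIn) (x : E) :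
    (closedBall c ρ).indicator (1 : E → ℝ) x ≤ φ x := by
  by_cases hx : x ∈ closedBall c ρ
  · rw [indicator_of_mem hx, φ.one_of_mem_closedBall (closedBall_subset_closedBall hρ hx),
      Pi.one_apply]
  · rw [indicator_of_notMem hx]
    exact φ.nonneg

lemma ContDiffBump.le_indicator_closedBall_rOut (φ : ContDiffBump c) (x : E) :
    φ x ≤ (closedBall c φ.rOut).indicator (1 : E → ℝ) x := by
  by_cases hx : x ∈ closedBall c φ.rOut
  · rw [indicator_of_mem hx, Pi.one_apply]
    exact φ.le_one
  · rw [indicator_of_notMem hx, φ.zero_of_le_dist (by simpa using hx : φ.rOut < dist x c).le]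

variable [MeasurableSpace E] [BorelSpace E]

lemma ContDiffBump.integrable_of_measure_ne_top (φ : ContDiffBump c) {μ : Measure E}
    (hμ : μ (closedBall c φ.rOut) ≠ ∞) : Integrable φ μ :=
  (integrable_indicator_one_closedBall hμ).mono' φ.continuous.aestronglyMeasurable
    (Eventually.of_forall fun x => by
      rw [Real.norm_of_nonneg φ.nonneg]
      exact φ.le_indicator_closedBall_rOut x)

lemma measure_closedBall_le_of_integral_le {μ ν : Measure E} {ρ R : ℝ} (hρ : 0 ≤ ρ)
    (hρR : ρ < R) (hμ : μ (closedBall c R) ≠ ∞) (hν : ν (closedBall c R) ≠ ∞)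
    (h : ∀ f : E → ℝ, ContDiff ℝ (⊤ : ℕ∞) f → tsupport f ⊆ closedBall c R →
      ∫ x, f x ∂μ ≤ ∫ x, f x ∂ν) :
    μ (closedBall c ρ) ≤ ν (closedBall c ρ) := by
  have hbump : ∀ r ∈ Ioc ρ R, μ (closedBall c ρ) ≤ ν (closedBall c r) := by
    rintro r ⟨hρr, hrR⟩
    let φ : ContDiffBump c := ⟨(ρ + r) / 2, r, by linarith, by linarith⟩
    have hμr : μ (closedBall c r) ≠ ∞ :=
      ne_top_of_le_ne_top hμ (measure_mono (closedBall_subset_closedBall hrR))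
    have hνr : ν (closedBall c r) ≠ ∞ :=
      ne_top_of_le_ne_top hν (measure_mono (closedBall_subset_closedBall hrR))
    have hμρ : μ (closedBall c ρ) ≠ ∞ :=
      ne_top_of_le_ne_top hμr (measure_mono (closedBall_subset_closedBall hρr.le))
    rw [← ENNReal.toReal_le_toReal hμρ hνr, ← measureReal_def, ← measureReal_def,
      ← integral_indicator_one measurableSet_closedBall,
      ← integral_indicator_one measurableSet_closedBall]
    calc ∫ x, (closedBall c ρ).indicator 1 x ∂μ ≤ ∫ x, φ x ∂μ :=
          integral_mono (integrable_indicator_one_closedBall hμρ)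
            (φ.integrable_of_measure_ne_top hμr) (φ.indicator_closedBall_le (by simp [φ]; linarith))
      _ ≤ ∫ x, φ x ∂ν :=
          h φ φ.contDiff (φ.tsupport_eq.trans_subset (closedBall_subset_closedBall hrR))
      _ ≤ ∫ x, (closedBall c r).indicator 1 x ∂ν :=
          integral_mono (φ.integrable_of_measure_ne_top hνr)
            (integrable_indicator_one_closedBall hνr) φ.le_indicator_closedBall_rOut
  have hlim : Tendsto (fun r => ν (closedBall c r)) (𝓝[>] ρ) (𝓝 (ν (closedBall c ρ))) := by
    rw [← biInter_gt_closedBall c ρ]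
    exact tendsto_measure_biInter_gt (fun _ _ => measurableSet_closedBall.nullMeasurableSet)
      (fun _ _ _ hij => closedBall_subset_closedBall hij) ⟨R, hρR, hν⟩
  exact ge_of_tendsto hlim (eventually_of_mem (Ioc_mem_nhdsGT hρR) hbump)

end Bump

lemma measure_Icc_eq_of_integral_eq {μ ν : Measure ℝ} {p q r : ℝ} (hr : 0 < r)
    (hμ : μ (Icc (p - r) (q + r)) ≠ ∞) (hν : ν (Icc (p - r) (q + r)) ≠ ∞)
    (h : ∀ f : ℝ → ℝ, ContDiff ℝ (⊤ : ℕ∞) f → tsupport f ⊆ Icc (p - r) (q + r) →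
      ∫ x, f x ∂μ = ∫ x, f x ∂ν) :
    μ (Icc p q) = ν (Icc p q) := by
  rcases lt_or_ge q p with hqp | hpq
  · simp [Icc_eq_empty_of_lt hqp]
  have hball : Icc (p - r) (q + r) = Metric.closedBall ((p + q) / 2) ((q - p) / 2 + r) := by
    rw [Real.closedBall_eq_Icc]; congr 1 <;> ring
  rw [hball] at hμ hν h
  rw [Real.Icc_eq_closedBall]
  exact le_antisymm
    (measure_closedBall_le_of_integral_le (by linarith) (by linarith) hμ hν fun f hf hs =>
      (h f hf hs).le)
    (measure_closedBall_le_of_integral_le (by linarith) (by linarith) hν hμ fun f hf hs =>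
      (h f hf hs).ge)

lemma restrict_Ioi_eq_of_measure_Icc_eq {μ ν : Measure ℝ}
    (hfin : ∀ p q : ℝ, 0 < p → μ (Icc p q) ≠ ∞)
    (h : ∀ p q : ℝ, 0 < p → μ (Icc p q) = ν (Icc p q)) :
    μ.restrict (Ioi 0) = ν.restrict (Ioi 0) := by
  have hcover : Ioi (0 : ℝ) = ⋃ n : ℕ × ℕ, Icc (1 / ((n.1 : ℝ) + 1)) n.2 := by
    ext x
    simp only [mem_Ioi, mem_iUnion, mem_Icc, Prod.exists]
    refine ⟨fun hx => ?_, fun ⟨m, n, hm, _⟩ => lt_of_lt_of_le (by positivity) hm⟩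
    obtain ⟨m, hm⟩ := exists_nat_one_div_lt hx
    obtain ⟨n, hn⟩ := exists_nat_ge x
    exact ⟨m, n, hm.le, hn⟩
  rw [hcover, Measure.restrict_iUnion_congr]
  rintro ⟨m, n⟩
  have hpos : (0 : ℝ) < 1 / (m + 1) := by positivity
  refine Measure.ext_of_Icc' _ _ (fun a b _ => ?_) (fun a b _ => ?_)
  · rw [Measure.restrict_apply measurableSet_Icc]
    exact ne_top_of_le_ne_top (hfin _ _ hpos) (measure_mono inter_subset_right)
  · rw [Measure.restrict_apply measurableSet_Icc, Measure.restrict_apply measurableSet_Icc,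
      Icc_inter_Icc]
    exact h _ _ (lt_max_of_lt_right hpos)

lemma restrict_Ioi_eq_of_integral_G0_eq {α : ℝ} (hα : 0 < α) {μ ν : Measure ℝ}
    (hμ : ∫⁻ x in Ioi 0, ENNReal.ofReal (min 1 x) ∂μ < ⊤)
    (hν : ∫⁻ x in Ioi 0, ENNReal.ofReal (min 1 x) ∂ν < ⊤)
    (heq : ∀ h : ℝ → ℝ, MemC0 h → (∀ x, 0 ≤ h x) →
      ∫ x in Ioi 0, G0 α h x ∂μ = ∫ x in Ioi 0, G0 α h x ∂ν) :
    μ.restrict (Ioi 0) = ν.restrict (Ioi 0) := by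
  have hIcc : ∀ p q : ℝ, 0 < p → μ.restrict (Ioi 0) (Icc p q) = ν.restrict (Ioi 0) (Icc p q) :=
    fun p q hp => measure_Icc_eq_of_integral_eq (half_pos hp)
      (measure_Icc_ne_top_of_lintegral_lt_top hμ (by linarith))
      (measure_Icc_ne_top_of_lintegral_lt_top hν (by linarith)) fun f hf hsupp =>
        setIntegral_Ioi_eq_of_integral_G0_eq hα hμ hν heq (hf.of_le (by norm_cast))
          (by linarith) hsupp
  simpa using restrict_Ioi_eq_of_measure_Icc_eq
    (fun p q hp => measure_Icc_ne_top_of_lintegral_lt_top hμ hp) hIcc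

/-- If `μ, ν` are positive Borel measures on `(0,∞)` with
`∫ min(1,x) μ(dx) < ∞`, `∫ min(1,x) ν(dx) < ∞`, and
`∫ G⁰₁ h dμ = ∫ G⁰₁ h dν` for every nonnegative `h ∈ C₀([0,∞))`, then `μ = ν`. -/
theorem stmt11 (μ ν : Measure ℝ)
    (hμ0 : μ (Set.Iic 0) = 0) (hν0 : ν (Set.Iic 0) = 0)
    (hμ : (∫⁻ x in Set.Ioi (0 : ℝ), ENNReal.ofReal (min 1 x) ∂μ) < ⊤)
    (hν : (∫⁻ x in Set.Ioi (0 : ℝ), ENNReal.ofReal (min 1 x) ∂ν) < ⊤)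
    (heq : ∀ h : ℝ → ℝ, MemC0 h → (∀ x, 0 ≤ h x) →
      ∫ x in Set.Ioi (0 : ℝ), G0 1 h x ∂μ = ∫ x in Set.Ioi (0 : ℝ), G0 1 h x ∂ν) :
    μ = ν := by
  have hconc : ∀ κ : Measure ℝ, κ (Iic 0) = 0 → κ.restrict (Ioi 0) = κ := fun κ hκ =>
    Measure.restrict_eq_self_of_ae_mem (measure_mono_null (fun x (hx : ¬ 0 < x) => not_lt.mp hx) hκ)
  rw [← hconc μ hμ0, ← hconc ν hν0]
  exact restrict_Ioi_eq_of_integral_G0_eq one_pos hμ hν heq
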